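/- arXiv:1102.2195 — 4 statements merged into one kernel-verified Lean document; each statement's English description precedes it below -/
import Mathlib

section
/- Let p be an element of a complete, lower continuous lattice L. Then every finite join-cover of p can be refined to a tight join-cover of p. -/
/-- A finite set `E` covers `p` if `p ≤ ⋁E`. -/
def Covers {α : Type*} [CompleteLattice α] (p : α) (E : Finset α) : Prop :=
  p ≤ E.sup id

/-- `X` refines `E`: every element of `X` lies below some element of `E`. -/
def Refines {α : Type*} [CompleteLattice α] (X E : Finset α) : Prop :=
  ∀ x ∈ X, ∃ e ∈ E, x ≤ e

/-- `E` covers `p` tightly: `E` covers `p`, no element of `E` is the least element,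
and `p ≰ x ⊔ ⋁(E \ {u})` whenever `u ∈ E` and `x < u`. -/
def TightCovers {α : Type*} [CompleteLattice α] [DecidableEq α]
    (p : α) (E : Finset α) : Prop :=
  Covers p E ∧ (∀ u ∈ E, u ≠ ⊥) ∧
    ∀ u ∈ E, ∀ x, x < u → ¬ p ≤ x ⊔ (E.erase u).sup id

/-- `L` is lower continuous: `a ⊔ ⋀D = ⋀ {a ⊔ x : x ∈ D}` for every nonempty
downward directed `D`. -/
def LowerContinuous (α : Type*) [CompleteLattice α] : Prop :=
  ∀ (a : α) (D : Set α), D.Nonempty → DirectedOn (· ≥ ·) D →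
    a ⊔ sInf D = ⨅ x ∈ D, a ⊔ x

/-! Every finite cover is shrunk one element at a time: the element `u` currently treated is
replaced by an element `m ≤ u` that is minimal among those still covering `p` together with
the rest. Such an `m` exists by Zorn's lemma, since lower continuity makes the infimum of a
chain of such elements again one of them. Shrinking later elements only shrinks the rest seen
by earlier ones, so their minimality survives; at the end the least element is dropped. -/

section

variable {α : Type*} [CompleteLattice α]

theorem Refines.trans {X Y Z : Finset α} (hXY : Refines X Y) (hYZ : Refines Y Z) :
    Refines X Z := fun x hx =>
  let ⟨y, hy, hxy⟩ := hXY x hx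
  let ⟨z, hz, hyz⟩ := hYZ y hy
  ⟨z, hz, hxy.trans hyz⟩

theorem refines_of_subset {X Y : Finset α} (h : X ⊆ Y) : Refines X Y :=
  fun x hx => ⟨x, h hx, le_rfl⟩

/-- Each element of `G` is minimal in the cover `G ∪ {c}` of `p`; in the construction `c` is the
join of the elements not shrunk yet. -/
def IsTightOver [DecidableEq α] (p c : α) (G : Finset α) : Prop :=
  ∀ u ∈ G, ∀ x < u, ¬ p ≤ x ⊔ (G.erase u).sup id ⊔ c

theorem IsTightOver.insert_minimal [DecidableEq α] {p c u m : α} {G : Finset α}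
    (hG : IsTightOver p (u ⊔ c) G) (hm : Minimal (fun x => p ≤ x ⊔ (G.sup id ⊔ c)) m)
    (hmu : m ≤ u) : IsTightOver p c (insert m G) := by
  intro v hv x hxv hpx
  rcases Finset.mem_insert.mp hv with rfl | hvG
  · refine hm.not_prop_of_lt hxv (hpx.trans ?_)
    rw [← sup_assoc]
    gcongr
    exact Finset.erase_insert_subset v G
  · refine hG v hvG x hxv (hpx.trans ?_)
    have hrest : ((insert m G).erase v).sup id ≤ u ⊔ (G.erase v).sup id :=
      Finset.sup_le fun a ha => by
        rcases Finset.mem_insert.mp (Finset.mem_of_mem_erase ha) with rfl | haG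
        · exact le_sup_of_le_left hmu
        · exact le_sup_of_le_right
            (Finset.le_sup (f := id) (Finset.mem_erase.mpr ⟨Finset.ne_of_mem_erase ha, haG⟩))
    calc x ⊔ ((insert m G).erase v).sup id ⊔ c
        ≤ x ⊔ (u ⊔ (G.erase v).sup id) ⊔ c := sup_le_sup_right (sup_le_sup_left hrest x) c
      _ = x ⊔ (G.erase v).sup id ⊔ (u ⊔ c) := by ac_rfl

theorem IsTightOver.tightCovers_erase_bot [DecidableEq α] {p : α} {F : Finset α}
    (hcov : Covers p F) (ht : IsTightOver p ⊥ F) : TightCovers p (F.erase ⊥) := by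
  refine ⟨by rwa [Covers, Finset.sup_erase_bot], fun u hu => Finset.ne_of_mem_erase hu,
    fun u hu x hxu => ?_⟩
  rw [Finset.erase_right_comm, Finset.sup_erase_bot]
  simpa only [sup_bot_eq] using ht u (Finset.mem_of_mem_erase hu) x hxu

namespace LowerContinuous

variable (hlc : LowerContinuous α)
include hlc

theorem le_sup_sInf {p b : α} {D : Set α} (hD : D.Nonempty) (hdir : DirectedOn (· ≥ ·) D)
    (h : ∀ d ∈ D, p ≤ d ⊔ b) : p ≤ sInf D ⊔ b := by
  rw [sup_comm, hlc b D hD hdir]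
  exact le_iInf₂ fun d hd => (h d hd).trans_eq (sup_comm d b)

theorem exists_minimal_le {p u b : α} (h : p ≤ u ⊔ b) :
    ∃ m ≤ u, Minimal (fun x => p ≤ x ⊔ b) m := by
  obtain ⟨m, hmu, hm⟩ := zorn_le_nonempty₀ {x : αᵒᵈ | p ≤ x.ofDual ⊔ b}
    (fun c hcs hc y hy => ⟨OrderDual.toDual (sInf (OrderDual.toDual ⁻¹' c)),
      hlc.le_sup_sInf ⟨y.ofDual, hy⟩
        (hc.directedOn : DirectedOn (· ≥ ·) (OrderDual.toDual ⁻¹' c)) fun d hd => hcs hd,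
      fun _ hz => sInf_le hz⟩)
    (OrderDual.toDual u) h
  exact ⟨m.ofDual, hmu, hm⟩

theorem exists_cover_isTightOver_refines [DecidableEq α] {p : α} {G H : Finset α}
    (hcov : p ≤ G.sup id ⊔ H.sup id) (hG : IsTightOver p (H.sup id) G) :
    ∃ F, Covers p F ∧ IsTightOver p ⊥ F ∧ Refines F (G ∪ H) := by
  induction H using Finset.induction_on generalizing G with
  | empty =>
    simp only [Finset.sup_empty, sup_bot_eq, Finset.union_empty] at hcov hG ⊢
    exact ⟨G, hcov, hG, refines_of_subset subset_rfl⟩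
  | insert u H _ ih =>
    simp only [Finset.sup_insert, id_eq] at hcov hG
    obtain ⟨m, hmu, hm⟩ := hlc.exists_minimal_le (b := G.sup id ⊔ H.sup id) <|
      hcov.trans_eq (by ac_rfl)
    have hcov' : p ≤ (insert m G).sup id ⊔ H.sup id := by
      simpa only [Finset.sup_insert, id_eq, sup_assoc] using hm.prop
    obtain ⟨F, hFcov, hFt, hFr⟩ := ih hcov' (hG.insert_minimal hm hmu)
    refine ⟨F, hFcov, hFt, hFr.trans fun x hx => ?_⟩
    rcases Finset.mem_union.mp hx with hx | hx
    · rcases Finset.mem_insert.mp hx with rfl | hx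
      · exact ⟨u, by simp, hmu⟩
      · exact ⟨x, by simp [hx], le_rfl⟩
    · exact ⟨x, by simp [hx], le_rfl⟩

end LowerContinuous

end

/-- In a complete, lower continuous lattice, every finite join-cover of `p`
can be refined to a tight join-cover of `p`. -/
theorem stmt4 {α : Type*} [CompleteLattice α] [DecidableEq α]
    (hlc : LowerContinuous α) (p : α) (E : Finset α) (hE : Covers p E) :
    ∃ F : Finset α, TightCovers p F ∧ Refines F E := by
  obtain ⟨F, hFcov, hFt, hFr⟩ :=
    hlc.exists_cover_isTightOver_refines (p := p) (G := ∅) (H := E)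
      (by rw [Finset.sup_empty, bot_sup_eq]; exact hE)
      (by simp [IsTightOver])
  rw [Finset.empty_union] at hFr
  exact ⟨F.erase ⊥, hFt.tightCovers_erase_bot hFcov,
    (refines_of_subset (Finset.erase_subset _ _)).trans hFr⟩
end

section
/- Every algebraic atomistic lattice is strongly spatial: for every atom p and every finite join-cover A of p, there exists a minimal join-cover of p consisting of atoms that refines A. -/
/-- `E` covers `p` minimally: `E` covers `p` and every finite `X` covering `p`
and refining `E` contains `E`. -/
def MinCovers {α : Type*} [CompleteLattice α] (p : α) (E : Finset α) : Prop :=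
  Covers p E ∧ ∀ X : Finset α, Covers p X → Refines X E → E ⊆ X

/-! An atom `p` of a compactly generated lattice is compact. By atomisticity, a cover `A` of `p`
refines to the set of all atoms below members of `A`, and compactness extracts a finite subcover.
Any inclusion-minimal subcover `B` is a minimal cover: a cover `X` refining a set of atoms
consists of `⊥` and members of `B`, so `X ∩ B` still covers `p` and hence equals `B`. -/

section

variable {α : Type*} [CompleteLattice α]

theorem IsAtom.isCompactElement [IsCompactlyGenerated α] {p : α} (hp : IsAtom p) :
    IsCompactElement p := by
  obtain ⟨c, hc, hcp, hc_ne⟩ : ∃ c, IsCompactElement c ∧ c ≤ p ∧ ¬c ≤ ⊥ := by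
    simpa using mt le_iff_compact_le_imp.mpr (mt le_bot_iff.mp hp.1)
  rwa [(hp.le_iff.mp hcp).resolve_left (mt le_bot_iff.mpr hc_ne)] at hc

theorem Finset.sup_id_le_sSup_atoms_le [IsAtomistic α] (A : Finset α) :
    A.sup id ≤ sSup {q | IsAtom q ∧ ∃ a ∈ A, q ≤ a} :=
  Finset.sup_le fun a ha =>
    (sSup_atoms_le_eq a).ge.trans <| sSup_le_sSup fun _ ⟨hq, hqa⟩ => ⟨hq, a, ha, hqa⟩

theorem Minimal.minCovers {p : α} {B : Finset α} (hB : Minimal (Covers p) B)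
    (h_atoms : ∀ b ∈ B, IsAtom b) : MinCovers p B := by
  classical
  refine ⟨hB.prop, fun X hX hXB => ?_⟩
  have hX_inter : Covers p (X ∩ B) := hX.trans <| Finset.sup_le fun x hx => by
    obtain ⟨b, hb, hxb⟩ := hXB x hx
    rcases (h_atoms b hb).le_iff.mp hxb with rfl | rfl
    · exact bot_le
    · exact Finset.le_sup (f := id) (Finset.mem_inter.mpr ⟨hx, hb⟩)
  exact (hB.le_of_le hX_inter Finset.inter_subset_right).trans Finset.inter_subset_left

end

/-- Every algebraic atomistic lattice is strongly spatial: every finite join-cover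
of an atom `p` can be refined to a minimal join-cover of `p` consisting of atoms. -/
theorem stmt11 {α : Type*} [CompleteLattice α] [IsCompactlyGenerated α]
    [IsAtomistic α] (p : α) (hp : IsAtom p) (A : Finset α) (hA : Covers p A) :
    ∃ B : Finset α, MinCovers p B ∧ (∀ b ∈ B, IsAtom b) ∧ Refines B A := by
  obtain ⟨B₀, hB₀_atoms, hB₀⟩ :=
    (CompleteLattice.isCompactElement_iff_exists_le_sSup_of_le_sSup α p).mp hp.isCompactElement
      _ (hA.trans A.sup_id_le_sSup_atoms_le)
  obtain ⟨B, hBB₀, hB⟩ := exists_minimal_le_of_wellFoundedLT (Covers p) B₀ hB₀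
  have hB_atoms (b : α) (hb : b ∈ B) : IsAtom b ∧ ∃ a ∈ A, b ≤ a := hB₀_atoms (hBB₀ hb)
  exact ⟨B, hB.minCovers fun b hb => (hB_atoms b hb).1, fun b hb => (hB_atoms b hb).1,
    fun b hb => (hB_atoms b hb).2⟩
end

section
/- Let p, q, r be join-irreducible elements of a modular lattice L with col(p,q,r), i.e., p, q, r pairwise incomparable and p ∨ q = p ∨ r = q ∨ r. Then {q, r} is a tight join-cover of p: p ≤ q ∨ r, and for every x < q, p ≰ x ∨ r, and for every y < r, p ≰ q ∨ y. -/
/-!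
If `x < q ≤ x ⊔ r`, modularity gives `q = (x ⊔ r) ⊓ q = x ⊔ (r ⊓ q)`, so join-irreducibility of `q`
forces `q ≤ r`. Collinearity makes `p ≤ x ⊔ r` imply `q ≤ q ⊔ r = p ⊔ r ≤ x ⊔ r`, which is thus
ruled out by the incomparability of `q` and `r`; symmetrically for `y < r`.
-/

theorem SupIrred.le_of_le_sup_of_lt {α : Type*} [Lattice α] [IsModularLattice α] {q r x : α}
    (hq : SupIrred q) (hx : x < q) (hle : q ≤ x ⊔ r) : q ≤ r := by
  have hsup : x ⊔ r ⊓ q = q := by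
    rw [← sup_inf_assoc_of_le r hx.le, inf_eq_right.mpr hle]
  rcases hq.2 hsup with hxq | hrq
  · exact absurd hxq hx.ne
  · exact inf_eq_right.mp hrq

theorem SupIrred.not_le_sup_of_lt {α : Type*} [Lattice α] [IsModularLattice α] {p q r x : α}
    (hq : SupIrred q) (hqr : ¬ q ≤ r) (hx : x < q) (hsup : q ⊔ r ≤ p ⊔ r) : ¬ p ≤ x ⊔ r :=
  fun hp => hqr <| hq.le_of_le_sup_of_lt hx <|
    le_sup_left.trans <| hsup.trans <| sup_le hp le_sup_right

theorem stmt14_general {α : Type*} [Lattice α] [IsModularLattice α] (p q r : α)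
    (hq : SupIrred q) (hr : SupIrred r)
    (hqr : ¬ q ≤ r ∧ ¬ r ≤ q)
    (col₁ : p ⊔ q = p ⊔ r) (col₂ : p ⊔ r = q ⊔ r) :
    p ≤ q ⊔ r ∧ (∀ x, x < q → ¬ p ≤ x ⊔ r) ∧ (∀ y, y < r → ¬ p ≤ q ⊔ y) := by
  refine ⟨le_sup_left.trans col₂.le, fun x hx => hq.not_le_sup_of_lt hqr.1 hx col₂.ge,
    fun y hy => ?_⟩
  have hsup : r ⊔ q ≤ p ⊔ q := ((sup_comm r q).trans (col₁.trans col₂).symm).le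
  rw [sup_comm q y]
  exact hr.not_le_sup_of_lt hqr.2 hy hsup

/-- If `p, q, r` are pairwise incomparable join-irreducible elements of a modular
lattice with `p ⊔ q = p ⊔ r = q ⊔ r`, then `{q, r}` is a tight join-cover of `p`. -/
theorem stmt14 {α : Type*} [Lattice α] [IsModularLattice α] (p q r : α)
    (hp : SupIrred p) (hq : SupIrred q) (hr : SupIrred r)
    (hpq : ¬ p ≤ q ∧ ¬ q ≤ p) (hpr : ¬ p ≤ r ∧ ¬ r ≤ p) (hqr : ¬ q ≤ r ∧ ¬ r ≤ q)
    (col₁ : p ⊔ q = p ⊔ r) (col₂ : p ⊔ r = q ⊔ r) :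
    p ≤ q ⊔ r ∧ (∀ x, x < q → ¬ p ≤ x ⊔ r) ∧ (∀ y, y < r → ¬ p ≤ q ⊔ y) :=
  stmt14_general p q r hq hr hqr col₁ col₂
end

section
/- Let D be a nontrivial bounded distributive lattice. Define L(D) = 2 × D × 2 × 2 and K(D) = {(x₀,x₁,x₂,x₃) ∈ L(D) : for all i < j < k in {0,1,2,3}, x_i⁻ ∧ x_k⁻ ≤ x_j}, where x⁻ = 1 if x = 1 and x⁻ = 0 otherwise. Then the map γ : L(D) → L(D) given by γ(x)_j = x_j ∨ ⋁{x_i⁻ ∧ x_k⁻ : i < j < k} sends each x to the least element of K(D) above x; consequently K(D), with the componentwise order, is a closure system in L(D), hence a bounded lattice and a meet-subsemilattice of L(D). -/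
open Classical in
/-- Membership in `K(D) ⊆ L(D) = 2 × D × 2 × 2`: for all `i < j < k` in
`{0,1,2,3}`, `xᵢ⁻ ⊓ xₖ⁻ ≤ x_j`, where `x⁻ = 1` if `x = 1` and `x⁻ = 0` otherwise. -/
def inK (D : Type*) [DistribLattice D] [BoundedOrder D]
    (x : Bool × D × Bool × Bool) : Prop :=
  (x.1 = true → x.2.2.1 = true → x.2.1 = ⊤) ∧
  (x.1 = true → x.2.2.2 = true → x.2.1 = ⊤) ∧
  (x.1 = true → x.2.2.2 = true → x.2.2.1 = true) ∧
  (x.2.1 = ⊤ → x.2.2.2 = true → x.2.2.1 = true)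

open Classical in
/-- The closure map `γ : L(D) → L(D)`, `γ(x)_j = x_j ⊔ ⋁ {xᵢ⁻ ⊓ xₖ⁻ : i < j < k}`. -/
noncomputable def gam (D : Type*) [DistribLattice D] [BoundedOrder D]
    (x : Bool × D × Bool × Bool) : Bool × D × Bool × Bool :=
  (x.1,
   x.2.1 ⊔ (if x.1 = true ∧ x.2.2.1 = true then (⊤ : D) else ⊥)
         ⊔ (if x.1 = true ∧ x.2.2.2 = true then (⊤ : D) else ⊥),
   x.2.2.1 ⊔ (x.1 ⊓ x.2.2.2) ⊔ ((if x.2.1 = (⊤ : D) then true else false) ⊓ x.2.2.2),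
   x.2.2.2)

/-!
`γ` is extensive and monotone, and it fixes every point of `K(D)`; since moreover `γ(x) ∈ K(D)`,
every `y ∈ K(D)` above `x` satisfies `γ(x) ≤ γ(y) = y`. A subset of a meet-semilattice admitting
such least upper approximations is closed under binary meets, since the approximation of `y ⊓ z`
lies below both `y` and `z`.
-/

theorem inf_mem_of_forall_isLeast {α : Type*} [SemilatticeInf α] {p : α → Prop} {f : α → α}
    (hf : ∀ x, IsLeast {y | p y ∧ x ≤ y} (f x)) {y z : α} (hy : p y) (hz : p z) :
    p (y ⊓ z) := by
  have hle : f (y ⊓ z) ≤ y ⊓ z :=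
    le_inf ((hf _).2 ⟨hy, inf_le_left⟩) ((hf _).2 ⟨hz, inf_le_right⟩)
  exact le_antisymm hle (hf _).1.2 ▸ (hf _).1.1

theorem ite_top_bot_mono {α : Type*} [LE α] [BoundedOrder α] {p q : Prop} [Decidable p]
    [Decidable q] (h : p → q) : (if p then ⊤ else ⊥ : α) ≤ if q then ⊤ else ⊥ := by
  split_ifs <;> simp_all

section Gam

variable {D : Type*} [DistribLattice D] [BoundedOrder D]

theorem le_gam (x : Bool × D × Bool × Bool) : x ≤ gam D x :=
  ⟨le_rfl, le_sup_left.trans le_sup_left, le_sup_left.trans le_sup_left, le_rfl⟩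

open Classical in
theorem gam_mono : Monotone (gam D) := by
  rintro ⟨a, d, b, c⟩ ⟨a', d', b', c'⟩ ⟨ha, hd, hb, hc⟩
  rw [Bool.le_iff_imp] at ha hb hc
  have htop : d = ⊤ → d' = ⊤ := fun h => top_le_iff.mp (h ▸ hd)
  exact ⟨ha,
    sup_le_sup (sup_le_sup hd (ite_top_bot_mono fun h => ⟨ha h.1, hb h.2⟩))
      (ite_top_bot_mono fun h => ⟨ha h.1, hc h.2⟩),
    sup_le_sup (sup_le_sup hb (inf_le_inf ha hc)) (inf_le_inf (ite_top_bot_mono htop) hc), hc⟩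

theorem gam_eq_self_of_inK {x : Bool × D × Bool × Bool} (hx : inK D x) : gam D x = x := by
  obtain ⟨a, d, b, c⟩ := x
  obtain ⟨h1, h2, h3, h4⟩ := hx
  cases a <;> cases b <;> cases c <;> simp_all [gam]

theorem inK_gam (x : Bool × D × Bool × Bool) : inK D (gam D x) := by
  obtain ⟨a, d, b, c⟩ := x
  by_cases hd : d = ⊤ <;> cases a <;> cases b <;> cases c <;> simp_all [inK, gam]

theorem isLeast_gam (x : Bool × D × Bool × Bool) :
    IsLeast {y | inK D y ∧ x ≤ y} (gam D x) :=
  ⟨⟨inK_gam x, le_gam x⟩, fun _ ⟨hy, hxy⟩ => (gam_mono hxy).trans (gam_eq_self_of_inK hy).le⟩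

end Gam

theorem stmt16_general (D : Type*) [DistribLattice D] [BoundedOrder D] :
    (∀ x : Bool × D × Bool × Bool, IsLeast {y | inK D y ∧ x ≤ y} (gam D x)) ∧
      (∀ y z : Bool × D × Bool × Bool, inK D y → inK D z → inK D (y ⊓ z)) :=
  ⟨isLeast_gam, fun _ _ => inf_mem_of_forall_isLeast isLeast_gam⟩

/-- `γ(x)` is the least element of `K(D)` above `x`; consequently `K(D)` is a
closure system in `L(D)`, in particular it is closed under (componentwise) meets. -/
theorem stmt16 (D : Type*) [DistribLattice D] [BoundedOrder D] [Nontrivial D] :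
    (∀ x : Bool × D × Bool × Bool, IsLeast {y | inK D y ∧ x ≤ y} (gam D x)) ∧
      (∀ y z : Bool × D × Bool × Bool, inK D y → inK D z → inK D (y ⊓ z)) :=
  stmt16_general D
end
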